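/- arXiv:1506.07502 — 6 statements merged into one kernel-verified Lean document; each statement's English description precedes it below -/
import Mathlib

section
/- Let k ≥ 1 be a natural number and let g* = (1/(k+1))^{1/k}. If g* ≠ 1/2, then p* = (g* − √(g*(1−g*))) / (2g* − 1) satisfies 0 ≤ p* ≤ 1 and (p*)^2 / ((p*)^2 + (1−p*)^2) = g*. -/
/-!
Writing `a = √g` and `b = √(1 - g)`, so that `a² + b² = 1`, the formula for `p*` rationalizes to
`p* = a / (a + b)`: indeed `2g - 1 = (a - b)(a + b)` and `g - √(g(1 - g)) = a (a - b)`.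
Then `1 - p* = b / (a + b)`, so `p*² / (p*² + (1 - p*)²) = a² / (a² + b²) = g`.
-/

open Real

lemma sq_div_add_sq_one_sub_div (a b : ℝ) (hab : a + b ≠ 0) :
    (a / (a + b)) ^ 2 / ((a / (a + b)) ^ 2 + (1 - a / (a + b)) ^ 2) = a ^ 2 / (a ^ 2 + b ^ 2) := by
  have hone_sub : 1 - a / (a + b) = b / (a + b) := by field_simp; ring
  rw [hone_sub, div_pow, div_pow, ← add_div, div_div_div_cancel_right₀ (pow_ne_zero 2 hab)]

lemma sqrt_add_sqrt_one_sub_pos {g : ℝ} (hg0 : 0 ≤ g) : 0 < √g + √(1 - g) := by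
  rcases hg0.eq_or_lt with rfl | hg0
  · simp
  · linarith [sqrt_pos.2 hg0, sqrt_nonneg (1 - g)]

lemma sub_sqrt_mul_one_sub_div_eq {g : ℝ} (hg0 : 0 ≤ g) (hg1 : g ≤ 1) (hg : g ≠ 1 / 2) :
    (g - √(g * (1 - g))) / (2 * g - 1) = √g / (√g + √(1 - g)) := by
  have ha : √g ^ 2 = g := sq_sqrt hg0
  have hb : √(1 - g) ^ 2 = 1 - g := sq_sqrt (by linarith)
  rw [sqrt_mul hg0, div_eq_div_iff (by contrapose! hg; linarith)
    (sqrt_add_sqrt_one_sub_pos hg0).ne']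
  linear_combination -√(1 - g) * ha - √g * hb

theorem stmt_2_general (k : ℕ)
    (gstar pstar : ℝ)
    (hg : gstar = ((1 : ℝ) / (k + 1)) ^ ((1 : ℝ) / k))
    (hgne : gstar ≠ 1 / 2)
    (hp : pstar = (gstar - Real.sqrt (gstar * (1 - gstar))) / (2 * gstar - 1)) :
    0 ≤ pstar ∧ pstar ≤ 1 ∧
      pstar ^ 2 / (pstar ^ 2 + (1 - pstar) ^ 2) = gstar := by
  have hbase0 : (0 : ℝ) ≤ 1 / (k + 1) := by positivity
  have hbase1 : (1 : ℝ) / (k + 1) ≤ 1 :=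
    div_le_one_of_le₀ (by linarith [k.cast_nonneg (α := ℝ)]) (by positivity)
  have hg0 : 0 ≤ gstar := hg ▸ rpow_nonneg hbase0 _
  have hg1 : gstar ≤ 1 := hg ▸ rpow_le_one hbase0 hbase1 (by positivity)
  have hsum_pos := sqrt_add_sqrt_one_sub_pos hg0
  rw [hp, sub_sqrt_mul_one_sub_div_eq hg0 hg1 hgne, sq_div_add_sq_one_sub_div _ _ hsum_pos.ne',
    sq_sqrt hg0, sq_sqrt (by linarith)]
  refine ⟨by positivity, ?_, by simp⟩
  exact div_le_one_of_le₀ (by linarith [sqrt_nonneg (1 - gstar)]) hsum_pos.le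

/-- The basis-choice probability p* for which iterative sifting with quotas
n = 1 and k samples uniformly. -/
theorem stmt_2 (k : ℕ) (hk : 1 ≤ k)
    (gstar pstar : ℝ)
    (hg : gstar = ((1 : ℝ) / (k + 1)) ^ ((1 : ℝ) / k))
    (hgne : gstar ≠ 1 / 2)
    (hp : pstar = (gstar - Real.sqrt (gstar * (1 - gstar))) / (2 * gstar - 1)) :
    0 ≤ pstar ∧ pstar ≤ 1 ∧
      pstar ^ 2 / (pstar ^ 2 + (1 - pstar) ^ 2) = gstar :=
  stmt_2_general k gstar pstar hg hgne hp
end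

section
/- For any real g with 0 < g < 1 and g ≠ 1/2, the real number p = (g − √(g(1−g)))/(2g − 1) lies in the open interval (0,1) and satisfies p^2/(p^2 + (1−p)^2) = g. -/
/-! Writing `a = √g` and `b = √(1 - g)`, so that `a² + b² = 1` and `√(g(1 - g)) = ab`, the
formula simplifies to `p = a / (a + b)`, with `1 - p = b / (a + b)`. Hence `p ∈ (0, 1)` and
`p² / (p² + (1 - p)²) = a² / (a² + b²) = g`. -/

theorem div_add_mem_Ioo {a b : ℝ} (ha : 0 < a) (hb : 0 < b) : a / (a + b) ∈ Set.Ioo 0 1 :=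
  ⟨by positivity, (div_lt_one (by positivity)).2 (by linarith)⟩

theorem sq_div_sq_add_sq_one_sub_div_add {a b : ℝ} (hab : a + b ≠ 0) :
    (a / (a + b)) ^ 2 / ((a / (a + b)) ^ 2 + (1 - a / (a + b)) ^ 2) = a ^ 2 / (a ^ 2 + b ^ 2) := by
  have hcompl : 1 - a / (a + b) = b / (a + b) := by field_simp; ring
  rw [hcompl, div_pow, div_pow, ← add_div, div_div_div_cancel_right₀ (pow_ne_zero 2 hab)]

theorem sq_sub_mul_div_sq_sub_sq {a b : ℝ} (hab : a ≠ b) :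
    (a ^ 2 - a * b) / (a ^ 2 - b ^ 2) = a / (a + b) := by
  have hsub : a - b ≠ 0 := sub_ne_zero.2 hab
  calc (a ^ 2 - a * b) / (a ^ 2 - b ^ 2) = a * (a - b) / ((a + b) * (a - b)) := by ring_nf
    _ = a / (a + b) := mul_div_mul_right a (a + b) hsub

/-- Inversion of the map p ↦ p²/(p² + (1-p)²) on (0,1). -/
theorem stmt_3 (g : ℝ) (hg0 : 0 < g) (hg1 : g < 1) (hgne : g ≠ 1 / 2)
    (p : ℝ) (hp : p = (g - Real.sqrt (g * (1 - g))) / (2 * g - 1)) :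
    0 < p ∧ p < 1 ∧ p ^ 2 / (p ^ 2 + (1 - p) ^ 2) = g := by
  set a := Real.sqrt g
  set b := Real.sqrt (1 - g)
  have ha : 0 < a := Real.sqrt_pos.2 hg0
  have hb : 0 < b := Real.sqrt_pos.2 (by linarith)
  have ha2 : a ^ 2 = g := Real.sq_sqrt hg0.le
  have hb2 : b ^ 2 = 1 - g := Real.sq_sqrt (by linarith)
  have hab : a ≠ b := fun h => hgne (by linarith [congrArg (· ^ 2) h])
  have hsqrt : Real.sqrt (g * (1 - g)) = a * b := Real.sqrt_mul hg0.le _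
  have hpab : p = a / (a + b) := by
    rw [hp, hsqrt, ← sq_sub_mul_div_sq_sub_sq hab, ha2, hb2]
    ring_nf
  obtain ⟨hp0, hp1⟩ := hpab ▸ div_add_mem_Ioo ha hb
  refine ⟨hp0, hp1, ?_⟩
  rw [hpab, sq_div_sq_add_sq_one_sub_div_add (by positivity), ha2, hb2,
    add_sub_cancel, div_one]
end

section
/- Fix m, n, k ∈ ℕ with l := n + k ≤ m, and fix ϑ : Fin l → {0,1} of Hamming weight k. Then the number of pairs (u, v) with u, v : Fin m → {0,1} of Hamming weights n and k respectively, having disjoint supports, and such that listing the union of their supports in increasing order as r_1 < … < r_l, one has ϑ i = 0 ↔ u r_i = 1 (equivalently ϑ i = 1 ↔ v r_i = 1) for all i, equals C(m, n + k). In particular this count does not depend on ϑ. -/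
/-!
A pair `(u, v)` as in the statement is determined by its witness `r`: on the range of `r` the
string `ϑ` dictates which of `u`, `v` is set, and off it both vanish. Conversely every strictly
monotone `r : Fin (n + k) → Fin m` yields such a pair, and `r` is recovered from the pair as the
increasing enumeration of the union of the supports. So the pairs are in bijection with the order
embeddings `Fin (n + k) ↪o Fin m`, i.e. with the `(n + k)`-subsets of `Fin m`.
-/

open Finset Function

section ExtendByFalse

variable {ι α : Type*} {r : ι → α}

lemma extend_false_eq_true_iff (hr : Injective r) (w : ι → Bool) (x : α) :
    extend r w (fun _ => false) x = true ↔ ∃ i, r i = x ∧ w i = true := by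
  by_cases hx : ∃ i, r i = x
  · obtain ⟨i, rfl⟩ := hx
    simp [hr.extend_apply, hr.eq_iff]
  · rw [extend_apply' _ _ _ hx]
    simp_all

lemma card_filter_extend_false_eq_true [Fintype ι] [Fintype α] (hr : Injective r)
    (w : ι → Bool) :
    #{x | extend r w (fun _ => false) x = true} = #{i | w i = true} := by
  classical
  have hsupp : ({x | extend r w (fun _ => false) x = true} : Finset α)
      = ({i | w i = true} : Finset ι).map ⟨r, hr⟩ := by
    ext x
    simp [extend_false_eq_true_iff hr, and_comm]
  rw [hsupp, card_map]

end ExtendByFalse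

/-- The pair `(u, v)` obtained by writing `ϑ` along `r`: position `r i` goes to `u` when
`ϑ i = false` and to `v` when `ϑ i = true`. -/
noncomputable def placeAlong {ι α : Type*} (ϑ : ι → Bool) (r : ι → α) :
    (α → Bool) × (α → Bool) :=
  (extend r (fun i => !ϑ i) fun _ => false, extend r ϑ fun _ => false)

section PlaceAlong

variable {ι α : Type*} {ϑ : ι → Bool} {r : ι → α}

lemma placeAlong_fst_apply (hr : Injective r) (i : ι) :
    (placeAlong ϑ r).1 (r i) = !ϑ i :=
  hr.extend_apply (fun i => !ϑ i) (fun _ => false) i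

lemma placeAlong_fst_or_snd_iff (hr : Injective r) (x : α) :
    (placeAlong ϑ r).1 x = true ∨ (placeAlong ϑ r).2 x = true ↔ ∃ i, r i = x := by
  simp only [placeAlong, extend_false_eq_true_iff hr]
  constructor
  · rintro (⟨i, hi, -⟩ | ⟨i, hi, -⟩) <;> exact ⟨i, hi⟩
  · rintro ⟨i, hi⟩
    cases h : ϑ i
    · exact .inl ⟨i, hi, by simp [h]⟩
    · exact .inr ⟨i, hi, h⟩

lemma placeAlong_not_fst_and_snd (hr : Injective r) (x : α) :
    ¬((placeAlong ϑ r).1 x = true ∧ (placeAlong ϑ r).2 x = true) := by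
  simp only [placeAlong, extend_false_eq_true_iff hr]
  rintro ⟨⟨i, rfl, hi⟩, ⟨j, hj, hj'⟩⟩
  obtain rfl := hr hj
  simp_all

lemma eq_placeAlong (hr : Injective r) (uv : (α → Bool) × (α → Bool))
    (hdisj : ∀ x, ¬(uv.1 x = true ∧ uv.2 x = true))
    (hunion : ∀ x, (uv.1 x = true ∨ uv.2 x = true) ↔ ∃ i, r i = x)
    (hϑ : ∀ i, ϑ i = false ↔ uv.1 (r i) = true) :
    uv = placeAlong ϑ r := by
  have hfst : ∀ i, uv.1 (r i) = !ϑ i := fun i => by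
    cases h : uv.1 (r i) <;> cases h' : ϑ i <;> simp_all
  have hsnd : ∀ i, uv.2 (r i) = ϑ i := fun i => by
    have := hdisj (r i); have := (hunion (r i)).2 ⟨i, rfl⟩
    cases h : uv.2 (r i) <;> cases h' : ϑ i <;> simp_all
  have hoff : ∀ x, (¬∃ i, r i = x) → uv.1 x = false ∧ uv.2 x = false := fun x hx => by
    simpa using mt (hunion x).1 hx
  ext x
  all_goals
    by_cases hx : ∃ i, r i = x
    · obtain ⟨i, rfl⟩ := hx
      simp [placeAlong, hr.extend_apply, hfst, hsnd]
    · simp [placeAlong, extend_apply' _ _ _ hx, hoff x hx]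

lemma placeAlong_orderEmbedding_injective [LinearOrder ι] [WellFoundedLT ι] [Preorder α]
    (ϑ : ι → Bool) : Injective fun r : ι ↪o α => placeAlong ϑ r := by
  intro r s hrs
  rw [← OrderEmbedding.range_inj]
  ext x
  simp only [Set.mem_range, ← placeAlong_fst_or_snd_iff (ϑ := ϑ) r.injective,
    ← placeAlong_fst_or_snd_iff (ϑ := ϑ) s.injective, hrs]

end PlaceAlong

lemma card_fin_orderEmbedding (l : ℕ) (α : Type*) [LinearOrder α] :
    Nat.card (Fin l ↪o α) = (Nat.card α).choose l := by
  rw [Nat.card_congr Set.powersetCard.ofFinEmbEquiv, Set.powersetCard.card]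

theorem stmt_8_general (m n k : ℕ) (ϑ : Fin (n + k) → Bool)
    (hϑ : (Finset.univ.filter (fun i => ϑ i = true)).card = k) :
    (Finset.univ.filter (fun uv : (Fin m → Bool) × (Fin m → Bool) =>
        (Finset.univ.filter (fun i => uv.1 i = true)).card = n ∧
        (Finset.univ.filter (fun i => uv.2 i = true)).card = k ∧
        (∀ i, ¬(uv.1 i = true ∧ uv.2 i = true)) ∧
        ∃ r : Fin (n + k) → Fin m, StrictMono r ∧
          (∀ x, (uv.1 x = true ∨ uv.2 x = true) ↔ ∃ i, r i = x) ∧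
          (∀ i, ϑ i = false ↔ uv.1 (r i) = true))).card
      = m.choose (n + k) := by
  classical
  have hϑ_false : #{i | (!ϑ i) = true} = n := by
    have := card_filter_add_card_filter_not (s := univ) (fun i => ϑ i = true)
    rw [hϑ, card_univ, Fintype.card_fin] at this
    simp only [Bool.not_eq_true', Bool.not_eq_true] at this ⊢
    omega
  calc _ = #(univ.image fun r : Fin (n + k) ↪o Fin m => placeAlong ϑ r) := by
        congr 1
        ext uv
        simp only [mem_filter, mem_univ, true_and, mem_image]
        constructor
        · rintro ⟨-, -, hdisj, r, hr, hunion, hfollow⟩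
          exact ⟨.ofStrictMono r hr, (eq_placeAlong hr.injective uv hdisj hunion hfollow).symm⟩
        · rintro ⟨r, rfl⟩
          refine ⟨?_, ?_, placeAlong_not_fst_and_snd r.injective, r, r.strictMono,
            placeAlong_fst_or_snd_iff r.injective, fun i => ?_⟩
          · rw [placeAlong, card_filter_extend_false_eq_true r.injective, hϑ_false]
          · rw [placeAlong, card_filter_extend_false_eq_true r.injective, hϑ]
          · rw [placeAlong_fst_apply r.injective]; cases ϑ i <;> simp
    _ = m.choose (n + k) := by
      rw [card_image_of_injective _ (placeAlong_orderEmbedding_injective ϑ), card_univ,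
        Fintype.card_eq_nat_card, card_fin_orderEmbedding, Nat.card_eq_fintype_card,
        Fintype.card_fin]

/-- The key counting step for uniform sampling of LCA sifting: the number of
pairs (u,v) of disjoint strings of weights n and k whose union of supports,
enumerated in increasing order by r, satisfies ϑ i = 0 ↔ u (r i) = 1, equals
C(m, n+k), independently of ϑ. -/
theorem stmt_8 (m n k : ℕ) (hlm : n + k ≤ m) (ϑ : Fin (n + k) → Bool)
    (hϑ : (Finset.univ.filter (fun i => ϑ i = true)).card = k) :
    (Finset.univ.filter (fun uv : (Fin m → Bool) × (Fin m → Bool) =>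
        (Finset.univ.filter (fun i => uv.1 i = true)).card = n ∧
        (Finset.univ.filter (fun i => uv.2 i = true)).card = k ∧
        (∀ i, ¬(uv.1 i = true ∧ uv.2 i = true)) ∧
        ∃ r : Fin (n + k) → Fin m, StrictMono r ∧
          (∀ x, (uv.1 x = true ∨ uv.2 x = true) ↔ ∃ i, r i = x) ∧
          (∀ i, ϑ i = false ↔ uv.1 (r i) = true))).card
      = m.choose (n + k) :=
  stmt_8_general m n k ϑ hϑ
end

section
/- Let Ω be a finite sample space of triples (z, z', ϑ) with z, z' ∈ {0,1}^l and ϑ ranging over l-bit strings of Hamming weight k, and suppose the probability mass function factorizes as P(z, z', ϑ) = Q(z, z') · c for a fixed constant c > 0 (independent of ϑ) and a function Q ≥ 0. Fix σ ≤ l with P[Σ_tot = σ] > 0, where Σ_tot(z,z',ϑ) = ∑_i (z_i ⊕ z'_i), and let Σ_key(z,z',ϑ) = ∑_i (1 − ϑ_i)(z_i ⊕ z'_i) with n = l − k. Then for every j, P[Σ_key = j | Σ_tot = σ] = C(σ, j) · C(l − σ, n − j) / C(l, n). -/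
open Finset

lemma countB (n l : ℕ) (j : ℕ) (E : Finset (Fin l)) :
    (univ.filter fun T : Finset (Fin l) => T.card = n ∧ (E ∩ T).card = j).card
    = E.card.choose j * (if j ≤ n then (l - E.card).choose (n - j) else 0) := by
  by_cases hj : j ≤ n
  · simp only [hj, if_true]
    rw [show E.card.choose j * (l - E.card).choose (n-j)
        = ((E.powersetCard j) ×ˢ (Eᶜ.powersetCard (n-j))).card by
      rw [Finset.card_product, Finset.card_powersetCard, Finset.card_powersetCard,
        Finset.card_compl, Fintype.card_fin]]
    apply Finset.card_bij' (fun T _ => (E ∩ T, T \ E))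
      (fun p _ => p.1 ∪ p.2)
    · intro T hT
      simp only [mem_filter, mem_univ, true_and] at hT
      simp only [Finset.mem_product, Finset.mem_powersetCard]
      have hsub : T \ E ⊆ Eᶜ := fun x hx => by
        simp only [Finset.mem_compl]; exact (Finset.mem_sdiff.mp hx).2
      refine ⟨⟨Finset.inter_subset_left, hT.2⟩, hsub, ?_⟩
      have := Finset.card_inter_add_card_sdiff T E
      rw [Finset.inter_comm] at this
      omega
    · intro p hp
      simp only [Finset.mem_product, Finset.mem_powersetCard] at hp
      obtain ⟨⟨h1s, h1c⟩, h2s, h2c⟩ := hp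
      have hdisj : Disjoint p.1 p.2 := by
        refine Finset.disjoint_left.mpr fun x hx1 hx2 => ?_
        have := h2s hx2
        simp only [Finset.mem_compl] at this
        exact this (h1s hx1)
      simp only [mem_filter, mem_univ, true_and]
      constructor
      · rw [Finset.card_union_of_disjoint hdisj, h1c, h2c]; omega
      · have : E ∩ (p.1 ∪ p.2) = p.1 := by
          rw [Finset.inter_union_distrib_left]
          rw [Finset.inter_eq_right.mpr h1s]
          have : E ∩ p.2 = ∅ := by
            rw [← Finset.disjoint_iff_inter_eq_empty]
            exact Finset.disjoint_left.mpr fun x hx hx2 => by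
              have := h2s hx2; simp only [Finset.mem_compl] at this; exact this hx
          rw [this, Finset.union_empty]
        rw [this, h1c]
    · intro T hT
      simp only
      rw [Finset.union_comm, Finset.inter_comm, Finset.sdiff_union_inter T E]
    · intro p hp
      simp only [Finset.mem_product, Finset.mem_powersetCard] at hp
      obtain ⟨⟨h1s, h1c⟩, h2s, h2c⟩ := hp
      have hE2 : E ∩ p.2 = ∅ := by
        rw [← Finset.disjoint_iff_inter_eq_empty]
        exact Finset.disjoint_left.mpr fun x hx hx2 => by
          have := h2s hx2; simp only [Finset.mem_compl] at this; exact this hx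
      have h1 : E ∩ (p.1 ∪ p.2) = p.1 := by
        rw [Finset.inter_union_distrib_left, Finset.inter_eq_right.mpr h1s, hE2,
          Finset.union_empty]
      have h2 : (p.1 ∪ p.2) \ E = p.2 := by
        rw [Finset.union_sdiff_distrib, Finset.sdiff_eq_empty_iff_subset.mpr h1s,
          Finset.empty_union, Finset.sdiff_eq_self_iff_disjoint.mpr]
        exact Finset.disjoint_left.mpr fun x hx2 hx => by
          have := h2s hx2; simp only [Finset.mem_compl] at this; exact this hx
      exact Prod.ext h1 h2
  · simp only [hj, if_false, mul_zero]
    rw [Finset.card_eq_zero, Finset.filter_eq_empty_iff]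
    intro T _
    rintro ⟨h1, h2⟩
    exact hj (h2 ▸ h1 ▸ Finset.card_le_card Finset.inter_subset_right)

lemma funToSet (n k l : ℕ) (hl : l = n + k) (P : Finset (Fin l) → Prop)
    [DecidablePred P] :
    (univ.filter fun ϑ : Fin l → Bool =>
        (univ.filter fun i => ϑ i = true).card = k ∧ P (univ.filter fun i => ϑ i = false)).card
    = (univ.filter fun T : Finset (Fin l) => T.card = n ∧ P T).card := by
  refine Finset.card_bij' (fun ϑ _ => univ.filter fun i => ϑ i = false)
    (fun T _ => fun i => decide (i ∉ T)) ?_ ?_ ?_ ?_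
  · intro ϑ hϑ
    simp only [mem_filter, mem_univ, true_and] at hϑ ⊢
    refine ⟨?_, hϑ.2⟩
    have := Finset.card_filter_add_card_filter_not
      (s := univ) (p := fun i : Fin l => ϑ i = true)
    simp only [Finset.card_univ, Fintype.card_fin] at this
    have he : (univ.filter fun i : Fin l => ¬ ϑ i = true)
        = (univ.filter fun i : Fin l => ϑ i = false) := by
      apply Finset.filter_congr; intro i _; simp
    rw [he, hϑ.1] at this
    omega
  · intro T hT
    simp only [mem_filter, mem_univ, true_and] at hT ⊢
    have he : (univ.filter fun i : Fin l => (decide (i ∉ T)) = true)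
        = univ.filter (fun i => i ∉ T) := by
      apply Finset.filter_congr; intro i _; simp
    have he2 : (univ.filter fun i : Fin l => (decide (i ∉ T)) = false)
        = T := by
      ext i; simp
    rw [he, he2]
    refine ⟨?_, hT.2⟩
    rw [Finset.filter_not, Finset.filter_mem_eq_inter, Finset.univ_inter,
      Finset.card_sdiff_of_subset (Finset.subset_univ T), Finset.card_univ, Fintype.card_fin, hT.1]
    omega
  · intro ϑ _
    funext i
    by_cases h : ϑ i = false <;> simp [h]
  · intro T _
    ext i; simp

lemma countKey (n k l : ℕ) (hl : l = n + k) (σ j : ℕ) (q : Fin l → Prop)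
    [DecidablePred q] (hq : (univ.filter q).card = σ) :
    (univ.filter fun ϑ : Fin l → Bool =>
        (univ.filter fun i => ϑ i = true).card = k ∧
        (univ.filter fun i => ϑ i = false ∧ q i).card = j).card
    = σ.choose j * (if j ≤ n then (l - σ).choose (n - j) else 0) := by
  have hE : ∀ ϑ : Fin l → Bool,
      (univ.filter fun i => ϑ i = false ∧ q i)
      = (univ.filter q) ∩ (univ.filter fun i => ϑ i = false) := by
    intro ϑ; ext i; simp [and_comm]
  simp only [hE]
  rw [funToSet n k l hl (fun T => ((univ.filter q) ∩ T).card = j),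
    countB, hq]

lemma countTot (n k l : ℕ) (hl : l = n + k) :
    (univ.filter fun ϑ : Fin l → Bool =>
        (univ.filter fun i => ϑ i = true).card = k).card = l.choose n := by
  have h1 := funToSet n k l hl (fun _ => True)
  simp only [and_true] at h1
  rw [h1, show (univ.filter fun T : Finset (Fin l) => T.card = n)
      = Finset.powersetCard n univ from by ext T; simp [Finset.mem_powersetCard],
    Finset.card_powersetCard, Finset.card_univ, Fintype.card_fin]

/-- Under the two security criteria (uniform sampling and no basis-information
leak, encoded as the factorization P(z,z',ϑ) = Q(z,z')·c), the conditional
distribution of the number of key errors given the total number of errors is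
hypergeometric.  (The factor `if j ≤ n then _ else 0` encodes the convention
that the binomial coefficient C(l-σ, n-j) vanishes when n - j < 0.) -/
theorem stmt_12 (n k : ℕ) (l : ℕ) (hl : l = n + k)
    (Q : (Fin l → Bool) × (Fin l → Bool) → ℝ) (c : ℝ) (hc : 0 < c)
    (hQ : ∀ p, 0 ≤ Q p)
    (σ : ℕ) (hσ : σ ≤ l) (j : ℕ)
    (hden : 0 <
      ∑ t ∈ (Finset.univ.filter
          (fun t : (Fin l → Bool) × (Fin l → Bool) × (Fin l → Bool) =>
            (Finset.univ.filter (fun i => t.2.2 i = true)).card = k ∧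
            (Finset.univ.filter (fun i => t.1 i ≠ t.2.1 i)).card = σ)),
        Q (t.1, t.2.1) * c) :
    (∑ t ∈ (Finset.univ.filter
          (fun t : (Fin l → Bool) × (Fin l → Bool) × (Fin l → Bool) =>
            (Finset.univ.filter (fun i => t.2.2 i = true)).card = k ∧
            (Finset.univ.filter (fun i => t.1 i ≠ t.2.1 i)).card = σ ∧
            (Finset.univ.filter
              (fun i => t.2.2 i = false ∧ t.1 i ≠ t.2.1 i)).card = j)),
        Q (t.1, t.2.1) * c) /
      (∑ t ∈ (Finset.univ.filter
          (fun t : (Fin l → Bool) × (Fin l → Bool) × (Fin l → Bool) =>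
            (Finset.univ.filter (fun i => t.2.2 i = true)).card = k ∧
            (Finset.univ.filter (fun i => t.1 i ≠ t.2.1 i)).card = σ)),
        Q (t.1, t.2.1) * c)
    = (σ.choose j : ℝ) *
        (if j ≤ n then ((l - σ).choose (n - j) : ℝ) else 0) /
        (l.choose n : ℝ) := by
  set M : ℕ := σ.choose j * (if j ≤ n then (l - σ).choose (n - j) else 0) with hM
  set D0 : ℝ := ∑ z : Fin l → Bool, ∑ z' : Fin l → Bool,
      if (univ.filter fun i => z i ≠ z' i).card = σ then Q (z, z') * c else 0 with hD0
  have key : ∀ z z' : Fin l → Bool,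
      (∑ ϑ : Fin l → Bool,
        if ((univ.filter fun i => ϑ i = true).card = k ∧
            (univ.filter fun i => z i ≠ z' i).card = σ ∧
            (univ.filter fun i => ϑ i = false ∧ z i ≠ z' i).card = j)
        then Q (z, z') * c else 0)
      = (if (univ.filter fun i => z i ≠ z' i).card = σ then Q (z, z') * c else 0)
          * (M : ℝ) := by
    intro z z'
    by_cases h : (univ.filter fun i => z i ≠ z' i).card = σ
    · simp only [h, if_true, true_and]
      rw [← Finset.sum_filter, Finset.sum_const, nsmul_eq_mul,
        countKey n k l hl σ j (fun i => z i ≠ z' i) h, ← hM, mul_comm]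
    · simp [h]
  have tot : ∀ z z' : Fin l → Bool,
      (∑ ϑ : Fin l → Bool,
        if ((univ.filter fun i => ϑ i = true).card = k ∧
            (univ.filter fun i => z i ≠ z' i).card = σ)
        then Q (z, z') * c else 0)
      = (if (univ.filter fun i => z i ≠ z' i).card = σ then Q (z, z') * c else 0)
          * (l.choose n : ℝ) := by
    intro z z'
    by_cases h : (univ.filter fun i => z i ≠ z' i).card = σ
    · simp only [h, if_true, and_true]
      rw [← Finset.sum_filter, Finset.sum_const, nsmul_eq_mul,
        countTot n k l hl, mul_comm]
    · simp [h]
  have hnum : (∑ t ∈ (Finset.univ.filter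
          (fun t : (Fin l → Bool) × (Fin l → Bool) × (Fin l → Bool) =>
            (Finset.univ.filter (fun i => t.2.2 i = true)).card = k ∧
            (Finset.univ.filter (fun i => t.1 i ≠ t.2.1 i)).card = σ ∧
            (Finset.univ.filter
              (fun i => t.2.2 i = false ∧ t.1 i ≠ t.2.1 i)).card = j)),
        Q (t.1, t.2.1) * c) = D0 * (M : ℝ) := by
    rw [Finset.sum_filter]
    simp only [Fintype.sum_prod_type]
    rw [hD0]
    simp only [Finset.sum_mul]
    refine Finset.sum_congr rfl fun z _ => Finset.sum_congr rfl fun z' _ => ?_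
    rw [← key z z']
  have hden2 : (∑ t ∈ (Finset.univ.filter
          (fun t : (Fin l → Bool) × (Fin l → Bool) × (Fin l → Bool) =>
            (Finset.univ.filter (fun i => t.2.2 i = true)).card = k ∧
            (Finset.univ.filter (fun i => t.1 i ≠ t.2.1 i)).card = σ)),
        Q (t.1, t.2.1) * c) = D0 * (l.choose n : ℝ) := by
    rw [Finset.sum_filter]
    simp only [Fintype.sum_prod_type]
    rw [hD0]
    simp only [Finset.sum_mul]
    refine Finset.sum_congr rfl fun z _ => Finset.sum_congr rfl fun z' _ => ?_
    rw [← tot z z']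
  rw [hnum, hden2]
  rw [hden2] at hden
  have hD0ne : D0 ≠ 0 := by
    intro h0
    rw [h0, zero_mul] at hden
    exact lt_irrefl 0 hden
  rw [mul_div_mul_left _ _ hD0ne, hM]
  push_cast [apply_ite (fun m : ℕ => (m : ℝ))]
  rfl
end

section
/- Serfling's bound for hypergeometric tails: let l = n + k with n, k ≥ 1, let 0 ≤ σ ≤ l, let μ > 0, and set d = ⌈n(σ/l + (k/l)μ)⌉. Then ∑_{j=d}^{n} C(σ, j)·C(l−σ, n−j)/C(l, n) ≤ exp(−2·(k n / l)·(k/(k+1))·μ²). -/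
/-!
Draw the sample one item at a time from `σ` marked and `τ` unmarked items. Conditioning on
whether the first draw is marked expresses the moment generating function of the number of
marked items in a sample of size `n + 1` as a convex combination, with weights `σ / N` and
`τ / N`, of those for samples of size `n`. Hoeffding's two-point lemma bounds that combination,
so by induction on `n` the moment generating function at `t` is at most
`exp (t n σ / N + t² V / 8)`, where the variance proxy grows by at most `(k / (n + k))²` per draw
and hence stays below Serfling's `V = n (k + 1) / N`. A Chernoff bound with the optimal
`t = 4 δ / V`, for the deviation `δ = d - n σ / N ≥ n k μ / N`, gives `exp (-2 δ² / V)`.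
-/

open Finset Real

open MeasureTheory ProbabilityTheory in
theorem two_point_mgf_le {p : ℝ} (hp₀ : 0 ≤ p) (hp₁ : p ≤ 1) (x : ℝ) :
    p * exp x + (1 - p) ≤ exp (p * x + x ^ 2 / 8) := by
  have hX := hasSubgaussianMGF_of_mem_Icc (μ := Ber(true, false, ⟨p, hp₀, hp₁⟩))
    (X := fun b => if b then (1 : ℝ) else 0) (a := 0) (b := 1) .of_discrete
    (ae_of_all _ fun b => by cases b <;> simp)
  have hmgf := hX.mgf_le x
  simp only [mgf, integral_bernoulliMeasure] at hmgf
  norm_num at hmgf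
  calc p * exp x + (1 - p)
      = exp (p * x) * (p * exp (x * (1 - p)) + (1 - p) * exp (-(x * p))) := by
        simp only [mul_add, mul_left_comm (exp (p * x)), ← exp_add]
        ring_nf
        rw [exp_zero]
        ring
    _ ≤ exp (p * x) * exp (x ^ 2 / 8) := by
        gcongr
        exact hmgf.trans_eq (by ring_nf)
    _ = exp (p * x + x ^ 2 / 8) := (exp_add _ _).symm

theorem mul_exp_add_le {a b : ℝ} (ha : 0 ≤ a) (hb : 0 ≤ b) (hab : 0 < a + b) (x : ℝ) :
    a * exp x + b ≤ (a + b) * exp (a / (a + b) * x + x ^ 2 / 8) := by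
  have hp₁ : a / (a + b) ≤ 1 := div_le_one_of_le₀ (by linarith) hab.le
  calc a * exp x + b = (a + b) * (a / (a + b) * exp x + (1 - a / (a + b))) := by
        field_simp; ring
    _ ≤ _ := by gcongr; exact two_point_mgf_le (by positivity) hp₁ x

/-- `(σ + τ).choose n` times the moment generating function at `t` of the number of marked items
in a sample of size `n` drawn without replacement from `σ` marked and `τ` unmarked items. -/
noncomputable def hypergeomMGF (σ τ n : ℕ) (t : ℝ) : ℝ :=
  ∑ j ∈ range (n + 1), (σ.choose j : ℝ) * τ.choose (n - j) * exp (t * j)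

theorem cast_add_one_mul_choose_add_one (m i : ℕ) :
    ((i + 1 : ℕ) : ℝ) * (m + 1).choose (i + 1) = (m + 1) * m.choose i := by
  rw [mul_comm]; exact_mod_cast (Nat.add_one_mul_choose_eq m i).symm

theorem succ_mul_hypergeomMGF_succ (σ τ n : ℕ) (t : ℝ) :
    (n + 1) * hypergeomMGF (σ + 1) (τ + 1) (n + 1) t =
      (σ + 1) * exp t * hypergeomMGF σ (τ + 1) n t +
        (τ + 1) * hypergeomMGF (σ + 1) τ n t := by
  set f : ℕ → ℝ := fun j =>
    ((σ + 1).choose j : ℝ) * (τ + 1).choose (n + 1 - j) * exp (t * j)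
  have hsplit : (n + 1) * hypergeomMGF (σ + 1) (τ + 1) (n + 1) t =
      ∑ j ∈ range (n + 2), (j : ℝ) * f j +
        ∑ j ∈ range (n + 2), ((n + 1 - j : ℕ) : ℝ) * f j := by
    rw [hypergeomMGF, mul_sum, ← sum_add_distrib]
    refine sum_congr rfl fun j hj => ?_
    have : j ≤ n + 1 := Nat.lt_succ_iff.mp (mem_range.mp hj)
    rw [← add_mul, ← Nat.cast_add, Nat.add_sub_cancel' this]
    push_cast; rfl
  have hmarked : ∑ j ∈ range (n + 2), (j : ℝ) * f j =
      (σ + 1) * exp t * hypergeomMGF σ (τ + 1) n t := by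
    rw [sum_range_succ', hypergeomMGF, mul_sum]
    simp only [Nat.cast_zero, zero_mul, add_zero]
    refine sum_congr rfl fun i _ => ?_
    simp only [f, Nat.add_sub_add_right, ← mul_assoc, cast_add_one_mul_choose_add_one]
    push_cast; rw [mul_add, mul_one, exp_add]
    ring
  have hunmarked : ∑ j ∈ range (n + 2), ((n + 1 - j : ℕ) : ℝ) * f j =
      (τ + 1) * hypergeomMGF (σ + 1) τ n t := by
    rw [sum_range_succ, hypergeomMGF, mul_sum]
    simp only [Nat.sub_self, Nat.cast_zero, zero_mul, add_zero]
    refine sum_congr rfl fun j hj => ?_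
    obtain ⟨i, rfl⟩ : ∃ i, n = j + i :=
      Nat.exists_eq_add_of_le (Nat.lt_succ_iff.mp (mem_range.mp hj))
    have h1 : j + i + 1 - j = i + 1 := by omega
    simp only [f, h1, Nat.add_sub_cancel_left]
    linear_combination
      ((σ + 1).choose j : ℝ) * exp (t * j) * cast_add_one_mul_choose_add_one τ i
  rw [hsplit, hmarked, hunmarked]

theorem hypergeomMGF_zero_left (τ n : ℕ) (t : ℝ) : hypergeomMGF 0 τ n t = τ.choose n := by
  rw [hypergeomMGF, sum_eq_single 0]
  · simp
  · exact fun j _ hj => by simp [Nat.choose_eq_zero_of_lt (Nat.pos_of_ne_zero hj)]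
  · simp

theorem hypergeomMGF_zero_right (σ n : ℕ) (t : ℝ) :
    hypergeomMGF σ 0 n t = σ.choose n * exp (t * n) := by
  rw [hypergeomMGF, sum_eq_single n]
  · simp
  · intro j hj _
    have : n - j ≠ 0 := by have := mem_range.mp hj; omega
    simp [Nat.choose_eq_zero_of_lt (Nat.pos_of_ne_zero this)]
  · simp

theorem serfling_variance_succ_le {k : ℕ} (hk : 0 < k) (n : ℕ) :
    n * (k + 1) / (n + k) + ((k : ℝ) / (n + k)) ^ 2 ≤ (n + 1) * (k + 1) / (n + 1 + k) := by
  have hk' : (1 : ℝ) ≤ k := by exact_mod_cast hk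
  rw [div_pow, div_add_div _ _ (by positivity) (by positivity),
    div_le_div_iff₀ (by positivity) (by positivity)]
  nlinarith [(by positivity : (0 : ℝ) ≤ n * k * (n + k))]

/-- `n (k + 1) / (n + k) = n (1 - (n - 1) / N)` for `N = n + k` is Serfling's finite-population
correction of the variance proxy `n` of sampling with replacement. -/
noncomputable def serflingMGFBound (k n σ : ℕ) (t : ℝ) : ℝ :=
  (n + k).choose n * exp (t * n * σ / (n + k) + t ^ 2 * (n * (k + 1) / (n + k)) / 8)

theorem serflingMGFBound_step {k : ℕ} (hk : 0 < k) {n σ τ : ℕ}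
    (hστ : σ + 1 + (τ + 1) = n + 1 + k) (t : ℝ) :
    (σ + 1) * exp t * serflingMGFBound k n σ t + (τ + 1) * serflingMGFBound k n (σ + 1) t ≤
      (n + 1) * serflingMGFBound k (n + 1) (σ + 1) t := by
  have hk' : (0 : ℝ) < k := by exact_mod_cast hk
  have hN : (σ + 1 : ℝ) + (τ + 1) = n + k + 1 := by
    exact_mod_cast (by omega : σ + 1 + (τ + 1) = n + k + 1)
  have hchoose : ((n + k).choose n : ℝ) * (n + k + 1) = (n + 1) * (n + 1 + k).choose (n + 1) := by
    rw [mul_comm, mul_comm (n + 1 : ℝ), show n + 1 + k = n + k + 1 by ring]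
    exact_mod_cast Nat.add_one_mul_choose_eq (n + k) n
  simp only [serflingMGFBound]
  push_cast
  set C := ((n + k).choose n : ℝ)
  set W := t ^ 2 * (n * (k + 1) / (n + k)) / 8
  set x := t * k / (n + k)
  set A := t * n * (σ + 1) / (n + k) + W
  have hexp : exp t * exp (t * n * σ / (n + k) + W) = exp x * exp A := by
    rw [← exp_add, ← exp_add]
    congr 1
    simp only [x, A]
    field_simp
    ring
  have hlin : t * n * (σ + 1) / (n + k) + (σ + 1) / (n + k + 1) * x =
      t * (n + 1) * (σ + 1) / (n + 1 + k) := by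
    simp only [x]
    field_simp
    ring
  have hquad : W + x ^ 2 / 8 ≤ t ^ 2 * ((n + 1) * (k + 1) / (n + 1 + k)) / 8 := by
    have hvar := mul_le_mul_of_nonneg_left (serfling_variance_succ_le hk n) (sq_nonneg t)
    have hx : x ^ 2 = t ^ 2 * (k / (n + k)) ^ 2 := by simp only [x]; ring
    simp only [W]
    linarith
  -- `t + t n σ / N = x + t n (σ + 1) / N`: both terms share the factor `C * exp A`, leaving a
  -- two-point moment generating function.
  calc _ = C * exp A * ((σ + 1) * exp x + (τ + 1)) := by
        linear_combination (σ + 1) * C * hexp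
    _ ≤ C * exp A * ((n + k + 1) * exp ((σ + 1) / (n + k + 1) * x + x ^ 2 / 8)) := by
        gcongr
        rw [← hN]
        exact mul_exp_add_le (by positivity) (by positivity) (by positivity) x
    _ = (n + 1) * ((n + 1 + k).choose (n + 1) *
          exp (A + ((σ + 1) / (n + k + 1) * x + x ^ 2 / 8))) := by
        rw [exp_add A]
        linear_combination exp A * exp ((σ + 1) / (n + k + 1) * x + x ^ 2 / 8) * hchoose
    _ ≤ _ := by
        gcongr _ * (_ * exp ?_)
        simp only [A]
        linarith

theorem hypergeomMGF_le {k : ℕ} (hk : 0 < k) (t : ℝ) (n σ τ : ℕ) (hστ : σ + τ = n + k) :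
    hypergeomMGF σ τ n t ≤ serflingMGFBound k n σ t := by
  induction n generalizing σ τ with
  | zero => simp [hypergeomMGF, serflingMGFBound]
  | succ n ih =>
    have hk' : (0 : ℝ) < k := by exact_mod_cast hk
    have hV : 0 ≤ t ^ 2 * ((n + 1 : ℕ) * (k + 1) / ((n + 1 : ℕ) + k)) / 8 := by positivity
    rcases σ with _ | σ
    · obtain rfl : τ = n + 1 + k := by omega
      rw [hypergeomMGF_zero_left, serflingMGFBound]
      exact le_mul_of_one_le_right (Nat.cast_nonneg _) (one_le_exp (by simpa using hV))
    rcases τ with _ | τ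
    · rw [hypergeomMGF_zero_right, serflingMGFBound, show σ + 1 = n + 1 + k by omega]
      gcongr
      push_cast at hV ⊢
      rw [mul_div_cancel_right₀ _ (by positivity : (n : ℝ) + 1 + k ≠ 0)]
      linarith
    refine le_of_mul_le_mul_left ?_ (by positivity : (0 : ℝ) < n + 1)
    calc (n + 1) * hypergeomMGF (σ + 1) (τ + 1) (n + 1) t
        = (σ + 1) * exp t * hypergeomMGF σ (τ + 1) n t +
            (τ + 1) * hypergeomMGF (σ + 1) τ n t :=
          succ_mul_hypergeomMGF_succ σ τ n t
      _ ≤ (σ + 1) * exp t * serflingMGFBound k n σ t +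
            (τ + 1) * serflingMGFBound k n (σ + 1) t := by
          gcongr
          · exact ih σ (τ + 1) (by omega)
          · exact ih (σ + 1) τ (by omega)
      _ ≤ _ := serflingMGFBound_step hk hστ t

theorem sum_Icc_le_exp_mul_hypergeomMGF (σ τ n d : ℕ) {t : ℝ} (ht : 0 ≤ t) :
    ∑ j ∈ Icc d n, (σ.choose j : ℝ) * τ.choose (n - j) ≤
      exp (-(t * d)) * hypergeomMGF σ τ n t := by
  rw [hypergeomMGF, mul_sum]
  calc ∑ j ∈ Icc d n, (σ.choose j : ℝ) * τ.choose (n - j)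
      ≤ ∑ j ∈ Icc d n, exp (-(t * d)) * (σ.choose j * τ.choose (n - j) * exp (t * j)) := by
        refine sum_le_sum fun j hj => ?_
        have hdj : (d : ℝ) ≤ j := by exact_mod_cast (mem_Icc.mp hj).1
        have h1 : 1 ≤ exp (-(t * d)) * exp (t * j) := by
          rw [← exp_add]; exact one_le_exp (by nlinarith)
        calc (σ.choose j : ℝ) * τ.choose (n - j) = σ.choose j * τ.choose (n - j) * 1 :=
              (mul_one _).symm
          _ ≤ σ.choose j * τ.choose (n - j) * (exp (-(t * d)) * exp (t * j)) := by gcongr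
          _ = _ := by ring
    _ ≤ _ := by
        refine sum_le_sum_of_subset_of_nonneg (fun j hj => ?_) fun _ _ _ => by positivity
        exact mem_range.mpr (Nat.lt_succ_of_le (mem_Icc.mp hj).2)

theorem hypergeom_tail_le {k : ℕ} (hk : 0 < k) {n σ τ : ℕ} (hστ : σ + τ = n + k) (d : ℕ)
    {t : ℝ} (ht : 0 ≤ t) :
    ∑ j ∈ Icc d n, (σ.choose j : ℝ) * τ.choose (n - j) / (n + k).choose n ≤
      exp (-t * (d - n * σ / (n + k)) + t ^ 2 * (n * (k + 1) / (n + k)) / 8) := by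
  have hC : (0 : ℝ) < (n + k).choose n := by exact_mod_cast Nat.choose_pos (Nat.le_add_right n k)
  rw [← sum_div, div_le_iff₀ hC]
  calc _ ≤ exp (-(t * d)) * hypergeomMGF σ τ n t := sum_Icc_le_exp_mul_hypergeomMGF σ τ n d ht
    _ ≤ exp (-(t * d)) * serflingMGFBound k n σ t := by
        gcongr; exact hypergeomMGF_le hk t n σ τ hστ
    _ = _ := by
        rw [serflingMGFBound, mul_left_comm, ← exp_add, mul_comm]
        congr 2
        ring

/-- Serfling's bound for hypergeometric tails. -/
theorem stmt_14 (n k : ℕ) (hn : 1 ≤ n) (hk : 1 ≤ k) (l : ℕ) (hl : l = n + k)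
    (σ : ℕ) (hσ : σ ≤ l) (μ : ℝ) (hμ : 0 < μ)
    (d : ℕ) (hd : d = ⌈(n : ℝ) * ((σ : ℝ) / l + ((k : ℝ) / l) * μ)⌉₊) :
    ∑ j ∈ Finset.Icc d n,
        (σ.choose j : ℝ) * ((l - σ).choose (n - j) : ℝ) / (l.choose n : ℝ)
      ≤ Real.exp (-2 * ((k : ℝ) * n / l) * ((k : ℝ) / (k + 1)) * μ ^ 2) := by
  subst hl
  push_cast at hd ⊢
  have hnR : (0 : ℝ) < n := by exact_mod_cast hn
  set V : ℝ := n * (k + 1) / (n + k)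
  set δ : ℝ := d - n * σ / (n + k)
  have hδ : n * k * μ / (n + k) ≤ δ := by
    have hceil := hd ▸ Nat.le_ceil ((n : ℝ) * (σ / (n + k) + k / (n + k) * μ))
    have : (n : ℝ) * (σ / (n + k) + k / (n + k) * μ) =
        n * σ / (n + k) + n * k * μ / (n + k) := by
      ring
    simp only [δ]
    linarith
  have hV : 0 < V := by positivity
  have hδ₀ : 0 ≤ n * k * μ / (n + k) := by positivity
  calc _ ≤ exp (-(4 * δ / V) * δ + (4 * δ / V) ^ 2 * V / 8) :=
        hypergeom_tail_le hk (Nat.add_sub_cancel' hσ) d (div_nonneg (by linarith) hV.le)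
    _ = exp (-(2 * δ ^ 2 / V)) := by congr 1; field_simp; ring
    _ ≤ exp (-(2 * (n * k * μ / (n + k)) ^ 2 / V)) := by gcongr
    _ = _ := by
        congr 1
        simp only [V]
        field_simp
end

section
/- Let p_x, p_z ∈ [0,1] with p_x + p_z = 1, and m, n, k ∈ ℕ with n + k ≤ m. Define p_abort = ∑_{(n_x,n_z): n_x+n_z ≤ m, (n_x < n or n_z < k)} C(m,n_x)·C(m−n_x,n_z)·2^{m−n_x−n_z}·p_x^{m+n_x−n_z}·p_z^{m−n_x+n_z}, and for each of the C(n+k, k) strings ϑ of length n+k and weight k define P(ϑ) = C(m, n+k) · ∑_{n_x=n}^{m−k} ∑_{n_z=k}^{m−n_x} C(m−n−k, n_x−n)·C(m−k−n_x, n_z−k)·2^{m−n_x−n_z}·p_x^{m+n_x−n_z}·p_z^{m−n_x+n_z}·C(n_x,n)^{−1}·C(n_z,k)^{−1}. Then C(n+k, k) · P(ϑ) + p_abort = 1. -/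
/-!
Expanding `1 = ((px + pz) ^ 2) ^ m = (px² + pz² + 2 px pz) ^ m` as a trinomial gives weights
`siftWeight px pz m (nx, nz)`, `nx + nz ≤ m`, summing to one. The abort probability collects the
weights with `nx < n` or `nz < k`. On the others, the multinomial identity
`C(n+k,k) C(m,n+k) C(m-n-k,nx-n) C(m-k-nx,nz-k) = C(m,nx) C(m-nx,nz) C(nx,n) C(nz,k)`
turns `C(n+k,k)` times each summand of `P` into the corresponding weight.
-/

open Finset

theorem add_add_pow {R : Type*} [CommSemiring R] (x y z : R) (m : ℕ) :
    (x + y + z) ^ m = ∑ i ∈ range (m + 1), ∑ j ∈ range (m - i + 1),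
      x ^ i * y ^ j * z ^ (m - i - j) * m.choose i * (m - i).choose j := by
  rw [add_assoc, add_pow]
  refine sum_congr rfl fun i _ => ?_
  rw [add_pow, mul_sum, sum_mul]
  refine sum_congr rfl fun j _ => ?_
  ring

/-- Term `(i, j)` of the expansion of `(x² + z² + 2xz) ^ m`. -/
def siftWeight {R : Type*} [CommSemiring R] (x z : R) (m : ℕ) (p : ℕ × ℕ) : R :=
  m.choose p.1 * (m - p.1).choose p.2 * 2 ^ (m - p.1 - p.2) * x ^ (m + p.1 - p.2) *
    z ^ (m - p.1 + p.2)

theorem sum_siftWeight {R : Type*} [CommSemiring R] (x z : R) (m : ℕ) :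
    ∑ p ∈ (range (m + 1) ×ˢ range (m + 1)).filter (fun p => p.1 + p.2 ≤ m),
      siftWeight x z m p = (x + z) ^ (2 * m) := by
  rw [sum_finset_product _ (range (m + 1)) (fun i => range (m - i + 1)) (by simp only [mem_filter, mem_product, mem_range]; omega),
    pow_mul, show (x + z) ^ 2 = x ^ 2 + z ^ 2 + 2 * x * z by ring, add_add_pow]
  refine sum_congr rfl fun i hi => sum_congr rfl fun j hj => ?_
  obtain ⟨r, hr⟩ : ∃ r, m = i + j + r := ⟨m - i - j, by simp only [mem_range] at hi hj; omega⟩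
  subst hr
  simp only [siftWeight, show i + j + r - i - j = r by omega,
    show i + j + r + i - j = 2 * i + r by omega, show i + j + r - i + j = 2 * j + r by omega]
  ring

/-- Both sides are the multinomial coefficient `m! / (n! k! (a-n)! (b-k)! (m-a-b)!)`. -/
theorem choose_mul_choose_mul_choose_mul_choose {m n k a b : ℕ} (hn : n ≤ a) (hk : k ≤ b)
    (hab : a + b ≤ m) :
    (n + k).choose k * m.choose (n + k) * (m - n - k).choose (a - n) *
        (m - k - a).choose (b - k) =
      m.choose a * (m - a).choose b * a.choose n * b.choose k := by
  obtain ⟨a, rfl⟩ := Nat.exists_eq_add_of_le hn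
  obtain ⟨b, rfl⟩ := Nat.exists_eq_add_of_le hk
  obtain ⟨c, rfl⟩ := Nat.exists_eq_add_of_le hab
  apply Nat.cast_injective (R := ℚ)
  push_cast
  simp (disch := omega) only [Nat.cast_choose]
  simp only [show n + a + (k + b) + c - n - k = a + b + c by omega,
    show n + a + (k + b) + c - k - (n + a) = b + c by omega,
    show n + a + (k + b) + c - (n + a) = k + b + c by omega,
    show n + a + (k + b) + c - (n + k) = a + b + c by omega,
    show a + b + c - a = b + c by omega, Nat.add_sub_cancel_left, Nat.add_sub_cancel]
  field_simp

theorem choose_mul_choose_mul_eq_siftWeight {K : Type*} [Field K] [CharZero K]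
    (x z : K) {m n k a b : ℕ} (hn : n ≤ a) (hk : k ≤ b) (hab : a + b ≤ m) :
    ((n + k).choose k : K) * m.choose (n + k) *
        ((m - n - k).choose (a - n) * (m - k - a).choose (b - k) * 2 ^ (m - a - b) *
          x ^ (m + a - b) * z ^ (m - a + b) * (a.choose n : K)⁻¹ * (b.choose k : K)⁻¹) =
      siftWeight x z m (a, b) := by
  have hcoeff : ((n + k).choose k : K) * m.choose (n + k) * (m - n - k).choose (a - n) *
      (m - k - a).choose (b - k) = m.choose a * (m - a).choose b * a.choose n * b.choose k := by
    exact_mod_cast choose_mul_choose_mul_choose_mul_choose hn hk hab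
  have ha : (a.choose n : K) ≠ 0 := by exact_mod_cast (Nat.choose_pos hn).ne'
  have hb : (b.choose k : K) ≠ 0 := by exact_mod_cast (Nat.choose_pos hk).ne'
  calc _ = ((n + k).choose k : K) * m.choose (n + k) * (m - n - k).choose (a - n) *
        (m - k - a).choose (b - k) * (a.choose n : K)⁻¹ * (b.choose k : K)⁻¹ *
          (2 ^ (m - a - b) * x ^ (m + a - b) * z ^ (m - a + b)) := by ring
    _ = siftWeight x z m (a, b) := by
      rw [hcoeff, siftWeight]
      field_simp

theorem stmt_16_general (px pz : ℝ) (hsum : px + pz = 1) (m n k : ℕ)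
    (pabort P : ℝ)
    (habort : pabort =
      ∑ p ∈ (Finset.range (m + 1) ×ˢ Finset.range (m + 1)).filter
          (fun p => p.1 + p.2 ≤ m ∧ (p.1 < n ∨ p.2 < k)),
        (m.choose p.1 : ℝ) * ((m - p.1).choose p.2 : ℝ) *
          2 ^ (m - p.1 - p.2) * px ^ (m + p.1 - p.2) * pz ^ (m - p.1 + p.2))
    (hP : P = (m.choose (n + k) : ℝ) *
      ∑ nx ∈ Finset.Icc n (m - k), ∑ nz ∈ Finset.Icc k (m - nx),
        ((m - n - k).choose (nx - n) : ℝ) * ((m - k - nx).choose (nz - k) : ℝ) *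
          2 ^ (m - nx - nz) * px ^ (m + nx - nz) * pz ^ (m - nx + nz) *
          (nx.choose n : ℝ)⁻¹ * (nz.choose k : ℝ)⁻¹) :
    ((n + k).choose k : ℝ) * P + pabort = 1 := by
  set triangle := (range (m + 1) ×ˢ range (m + 1)).filter (fun p => p.1 + p.2 ≤ m)
  have hgood : ((n + k).choose k : ℝ) * P =
      ∑ p ∈ triangle.filter (fun p => ¬(p.1 < n ∨ p.2 < k)), siftWeight px pz m p := by
    rw [sum_finset_product _ (Icc n (m - k)) (fun a => Icc k (m - a))
        (by simp only [triangle, mem_filter, mem_product, mem_range, mem_Icc]; omega),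
      hP, ← mul_assoc, mul_sum]
    refine sum_congr rfl fun a ha => ?_
    rw [mul_sum]
    refine sum_congr rfl fun b hb => ?_
    simp only [mem_Icc] at ha hb
    exact choose_mul_choose_mul_eq_siftWeight px pz ha.1 hb.1 (by omega)
  have habort' : pabort = ∑ p ∈ triangle.filter (fun p => p.1 < n ∨ p.2 < k),
      siftWeight px pz m p := by
    rw [habort, filter_filter]
    rfl
  rw [hgood, habort', sum_filter_not_add_sum_filter, sum_siftWeight, hsum, one_pow]

/-- Normalization identity for the sampling distribution of LCA sifting:
the abort probability plus the C(n+k,k) equal sampling probabilities sum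
to one. -/
theorem stmt_16 (px pz : ℝ) (hpx0 : 0 ≤ px) (hpx1 : px ≤ 1) (hpz0 : 0 ≤ pz)
    (hpz1 : pz ≤ 1) (hsum : px + pz = 1) (m n k : ℕ) (hm : n + k ≤ m)
    (pabort P : ℝ)
    (habort : pabort =
      ∑ p ∈ (Finset.range (m + 1) ×ˢ Finset.range (m + 1)).filter
          (fun p => p.1 + p.2 ≤ m ∧ (p.1 < n ∨ p.2 < k)),
        (m.choose p.1 : ℝ) * ((m - p.1).choose p.2 : ℝ) *
          2 ^ (m - p.1 - p.2) * px ^ (m + p.1 - p.2) * pz ^ (m - p.1 + p.2))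
    (hP : P = (m.choose (n + k) : ℝ) *
      ∑ nx ∈ Finset.Icc n (m - k), ∑ nz ∈ Finset.Icc k (m - nx),
        ((m - n - k).choose (nx - n) : ℝ) * ((m - k - nx).choose (nz - k) : ℝ) *
          2 ^ (m - nx - nz) * px ^ (m + nx - nz) * pz ^ (m - nx + nz) *
          (nx.choose n : ℝ)⁻¹ * (nz.choose k : ℝ)⁻¹) :
    ((n + k).choose k : ℝ) * P + pabort = 1 :=
  stmt_16_general px pz hsum m n k pabort P habort hP
end
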